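/- Let B be an infinite Boolean algebra and let d(Stone(B)) denote the density of its Stone space, i.e. the least cardinality of a dense subset. Then there exists a discrete subspace of Stone(B) × Stone(B) whose cardinality equals d(Stone(B)). In particular, the spread of Stone(B) × Stone(B) (the supremum of cardinalities of its discrete subspaces) is at least the density of Stone(B). -/

import Mathlib

/-! Let `κ = d(Stone B)`; it is infinite because a finite set of ultrafilters separates only
finitely many elements of `B`. By transfinite recursion of length `κ` choose `b_α ≠ ⊥` and
ultrafilters `q_α ∋ b_α`, `r_α ∌ b_α` such that `b_α` lies in no earlier `q_β`, and `r_α` contains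
every earlier `b_β` that `q_α` contains. Then the open box `[b_α] × [b_αᶜ]` meets
`{(q_β, r_β)}` only at `β = α`.

The recursion never gets stuck: the earlier `q_β`, together with one ultrafilter through each
nonzero finite meet of earlier `b_β`, are fewer than `κ` ultrafilters, hence not dense, so
some `b ≠ ⊥` lies in none of them. For any `q ∋ b`, no finite meet of earlier `b_β` lying in `q`
is below `b`, so an ultrafilter `r` contains all of those `b_β` but not `b`. -/

open Cardinal

universe u

/-- An ultrafilter of a Boolean algebra `B`: a proper filter containing,
for each `b : B`, either `b` or `bᶜ`. -/
structure BAUltrafilter (B : Type u) [BooleanAlgebra B] where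
  carrier : Set B
  top_mem : ⊤ ∈ carrier
  bot_not_mem : ⊥ ∉ carrier
  inf_mem : ∀ ⦃x y : B⦄, x ∈ carrier → y ∈ carrier → x ⊓ y ∈ carrier
  mem_of_le : ∀ ⦃x y : B⦄, x ∈ carrier → x ≤ y → y ∈ carrier
  mem_or_compl_mem : ∀ x : B, x ∈ carrier ∨ xᶜ ∈ carrier

instance (B : Type u) [BooleanAlgebra B] : Membership B (BAUltrafilter B) :=
  ⟨fun q b => b ∈ q.carrier⟩

/-- The Stone topology on the set of ultrafilters of `B`, generated by the
basic (clopen) sets `{q : b ∈ q}` for `b : B`. -/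
instance stoneTopology (B : Type u) [BooleanAlgebra B] :
    TopologicalSpace (BAUltrafilter B) :=
  TopologicalSpace.generateFrom {U | ∃ b : B, U = {q : BAUltrafilter B | b ∈ q}}

open scoped symmDiff

namespace BAUltrafilter

variable {B : Type u} [BooleanAlgebra B] {q : BAUltrafilter B} {x y : B}

theorem ne_bot_of_mem (h : x ∈ q) : x ≠ ⊥ :=
  fun hx => q.bot_not_mem (hx ▸ h)

theorem inf_mem_iff : x ⊓ y ∈ q ↔ x ∈ q ∧ y ∈ q :=
  ⟨fun h => ⟨q.mem_of_le h inf_le_left, q.mem_of_le h inf_le_right⟩,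
    fun h => q.inf_mem h.1 h.2⟩

theorem compl_mem_iff : xᶜ ∈ q ↔ x ∉ q :=
  ⟨fun hc hx => q.bot_not_mem (by simpa using q.inf_mem hx hc),
    (q.mem_or_compl_mem x).resolve_left⟩

theorem sup_mem_iff : x ⊔ y ∈ q ↔ x ∈ q ∨ y ∈ q := by
  rw [← not_iff_not, ← compl_mem_iff, compl_sup, inf_mem_iff, compl_mem_iff, compl_mem_iff,
    not_or]

theorem symmDiff_mem_iff : x ∆ y ∈ q ↔ ¬(x ∈ q ↔ y ∈ q) := by
  simp only [symmDiff_def, sdiff_eq, sup_mem_iff, inf_mem_iff, compl_mem_iff]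
  tauto

theorem finset_inf_mem {ι : Type*} {s : Finset ι} {a : ι → B} (h : ∀ i ∈ s, a i ∈ q) :
    s.inf a ∈ q :=
  Finset.inf_induction q.top_mem (fun _ h₁ _ h₂ => q.inf_mem h₁ h₂) h

def ofIsPrime (J : Order.Ideal B) [hJ : J.IsPrime] : BAUltrafilter B where
  carrier := (J : Set B)ᶜ
  top_mem := hJ.top_notMem
  bot_not_mem h := h J.bot_mem
  inf_mem _ _ hx hy h := (hJ.mem_or_mem h).elim hx hy
  mem_of_le _ _ hx hxy hy := hx (J.lower hxy hy)
  mem_or_compl_mem x := by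
    refine not_and_or.1 fun h => hJ.top_notMem ?_
    exact sup_compl_eq_top (x := x) ▸ J.sup_mem h.1 h.2

theorem exists_forall_mem_of_forall_not_inf_le {ι : Type*} (a : ι → B) {b : B}
    (h : ∀ s : Finset ι, ¬s.inf a ≤ b) : ∃ r : BAUltrafilter B, (∀ i, a i ∈ r) ∧ b ∉ r := by
  classical
  -- Separate the filter generated by `a` from the principal ideal of `b` by a prime ideal.
  let F : Order.PFilter B := Order.IsPFilter.toPFilter <|
    .of_def (F := {x | ∃ s : Finset ι, s.inf a ≤ x}) ⟨⊤, ∅, le_top⟩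
      (fun _ ⟨s, hs⟩ _ ⟨t, ht⟩ => ⟨(s ∪ t).inf a, ⟨s ∪ t, le_rfl⟩, by
        rw [Finset.inf_union]
        exact ⟨inf_le_left.trans hs, inf_le_right.trans ht⟩⟩)
      (fun hxy ⟨s, hs⟩ => ⟨s, hs.trans hxy⟩)
  have hF : Disjoint (F : Set B) (Order.Ideal.principal b) :=
    Set.disjoint_left.2 fun _ ⟨s, hs⟩ hxb => h s (hs.trans hxb)
  obtain ⟨J, hJ, hbJ, hFJ⟩ := DistribLattice.prime_ideal_of_disjoint_filter_ideal hF
  refine ⟨ofIsPrime J, fun i => Set.disjoint_left.1 hFJ ⟨{i}, by simp⟩, fun hb => hb ?_⟩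
  exact hbJ (Order.Ideal.mem_principal.2 le_rfl)

theorem exists_mem_of_ne_bot (hx : x ≠ ⊥) : ∃ q : BAUltrafilter B, x ∈ q := by
  obtain ⟨q, -, hq⟩ := exists_forall_mem_of_forall_not_inf_le (fun _ : Empty => (⊤ : B)) (b := xᶜ)
    (by simpa using hx)
  exact ⟨q, not_not.1 (compl_mem_iff.not.1 hq)⟩

theorem isTopologicalBasis_setOf_mem :
    TopologicalSpace.IsTopologicalBasis
      {U : Set (BAUltrafilter B) | ∃ b : B, U = {q | b ∈ q}} := by
  refine ⟨?_, ?_, rfl⟩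
  · rintro _ ⟨b₁, rfl⟩ _ ⟨b₂, rfl⟩ q hq
    exact ⟨{p | b₁ ⊓ b₂ ∈ p}, ⟨b₁ ⊓ b₂, rfl⟩, inf_mem_iff.2 hq, fun p hp => inf_mem_iff.1 hp⟩
  · exact Set.eq_univ_of_forall fun q => ⟨{p | ⊤ ∈ p}, ⟨⊤, rfl⟩, q.top_mem⟩

theorem isOpen_setOf_mem (b : B) : IsOpen {q : BAUltrafilter B | b ∈ q} :=
  TopologicalSpace.isOpen_generateFrom_of_mem ⟨b, rfl⟩

theorem dense_iff {Q : Set (BAUltrafilter B)} :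
    Dense Q ↔ ∀ b : B, b ≠ ⊥ → ∃ q ∈ Q, b ∈ q := by
  rw [isTopologicalBasis_setOf_mem.dense_iff]
  constructor
  · intro h b hb
    obtain ⟨q, hbq, hqQ⟩ := h {p | b ∈ p} ⟨b, rfl⟩ (exists_mem_of_ne_bot hb)
    exact ⟨q, hqQ, hbq⟩
  · rintro h _ ⟨b, rfl⟩ ⟨p, hbp⟩
    obtain ⟨q, hqQ, hbq⟩ := h b (ne_bot_of_mem hbp)
    exact ⟨q, hbq, hqQ⟩

theorem finite_of_dense_of_finite {Q : Set (BAUltrafilter B)} (hQ : Dense Q) (hfin : Q.Finite) :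
    Finite B := by
  have := hfin.to_subtype
  refine Finite.of_injective (fun b : B => {q : Q | b ∈ (q : BAUltrafilter B)}) fun x y hxy => ?_
  by_contra hne
  obtain ⟨q, hqQ, hq⟩ := dense_iff.1 hQ (x ∆ y) (by rwa [Ne, symmDiff_eq_bot])
  exact symmDiff_mem_iff.1 hq (Set.ext_iff.1 hxy ⟨q, hqQ⟩)

theorem aleph0_le_mk_of_dense [Infinite B] {Q : Set (BAUltrafilter B)} (hQ : Dense Q) :
    ℵ₀ ≤ #Q := by
  rw [← not_lt, lt_aleph0_iff_set_finite]
  exact fun hfin => (finite_of_dense_of_finite hQ hfin).false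

end BAUltrafilter

theorem Cardinal.mk_finset_lt_of_lt {J : Type u} {κ : Cardinal.{u}} (hκ : ℵ₀ ≤ κ) (hJ : #J < κ) :
    #(Finset J) < κ := by
  rcases finite_or_infinite J with _ | _
  · exact (lt_aleph0_of_finite _).trans_le hκ
  · rwa [mk_finset_of_infinite]

theorem exists_transfinite_seq {α : Type*} {κ : Cardinal.{u}} (P : α → Prop) (R : α → α → Prop)
    (h : ∀ (J : Type u) (x : J → α), #J < κ → ∃ y, P y ∧ ∀ j, R (x j) y) :
    ∃ f : κ.ord.ToType → α, (∀ i, P (f i)) ∧ ∀ i j, i < j → R (f i) (f j) := by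
  choose next hnextP hnextR using h
  have hIio (i : κ.ord.ToType) : #(Set.Iio i) < κ := by simpa using mk_Iio_lt i
  let f : κ.ord.ToType → α := wellFounded_lt.fix fun i rec =>
    next (Set.Iio i) (fun j => rec j j.2) (hIio i)
  have hf (i) : f i = next (Set.Iio i) (fun j => f j) (hIio i) := wellFounded_lt.fix_eq _ i
  refine ⟨f, fun i => hf i ▸ hnextP _ _ _, fun i j hij => ?_⟩
  rw [hf j]
  exact hnextR (Set.Iio j) (fun k => f k) (hIio j) ⟨i, hij⟩

structure MarkedPair (B : Type u) [BooleanAlgebra B] where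
  mark : B
  left : BAUltrafilter B
  right : BAUltrafilter B

namespace MarkedPair

variable {B : Type u} [BooleanAlgebra B]

def toProd (x : MarkedPair B) : BAUltrafilter B × BAUltrafilter B := (x.left, x.right)

def IsMarked (x : MarkedPair B) : Prop := x.mark ∈ x.left ∧ x.mark ∉ x.right

def Precedes (x y : MarkedPair B) : Prop :=
  y.mark ∉ x.left ∧ (x.mark ∈ y.left → x.mark ∈ y.right)

section Chain

variable {I : Type*} [LinearOrder I] {f : I → MarkedPair B}

theorem eq_of_mark_mem_left_of_mark_notMem_right (hlt : ∀ i j, i < j → (f i).Precedes (f j))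
    {i j : I} (hl : (f i).mark ∈ (f j).left) (hr : (f i).mark ∉ (f j).right) : j = i := by
  rcases lt_trichotomy j i with hji | rfl | hij
  · exact absurd hl (hlt j i hji).1
  · rfl
  · exact absurd ((hlt i j hij).2 hl) hr

theorem injective_toProd_comp (hlt : ∀ i j, i < j → (f i).Precedes (f j))
    (hf : ∀ i, (f i).IsMarked) : Function.Injective (toProd ∘ f) :=
  fun i j hij => by
    have hl : (f i).left = (f j).left := congrArg Prod.fst hij
    have hr : (f i).right = (f j).right := congrArg Prod.snd hij
    refine (eq_of_mark_mem_left_of_mark_notMem_right hlt (i := i) ?_ ?_).symm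
    · exact hl ▸ (hf i).1
    · exact hr ▸ (hf i).2

theorem exists_isOpen_inter_range_toProd_comp (hlt : ∀ i j, i < j → (f i).Precedes (f j))
    (hf : ∀ i, (f i).IsMarked) (i : I) :
    ∃ U : Set (BAUltrafilter B × BAUltrafilter B),
      IsOpen U ∧ U ∩ Set.range (toProd ∘ f) = {toProd (f i)} := by
  refine ⟨{q | (f i).mark ∈ q} ×ˢ {r | (f i).markᶜ ∈ r},
    (BAUltrafilter.isOpen_setOf_mem _).prod (BAUltrafilter.isOpen_setOf_mem _), ?_⟩
  refine Set.eq_singleton_iff_unique_mem.2 ⟨⟨⟨(hf i).1, BAUltrafilter.compl_mem_iff.2 (hf i).2⟩,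
    i, rfl⟩, ?_⟩
  rintro _ ⟨⟨hl, hr⟩, j, rfl⟩
  rw [eq_of_mark_mem_left_of_mark_notMem_right hlt hl (BAUltrafilter.compl_mem_iff.1 hr)]
  rfl

end Chain

theorem exists_isMarked_forall_precedes {κ : Cardinal.{u}} (hκ : ℵ₀ ≤ κ)
    (hdense : ∀ Q : Set (BAUltrafilter B), Dense Q → κ ≤ #Q)
    {J : Type u} (x : J → MarkedPair B) (hJ : #J < κ) :
    ∃ y : MarkedPair B, y.IsMarked ∧ ∀ j, (x j).Precedes y := by
  choose u hu using fun σ : {σ : Finset J // σ.inf (mark ∘ x) ≠ ⊥} =>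
    BAUltrafilter.exists_mem_of_ne_bot σ.2
  have hcard : #↑(Set.range (left ∘ x) ∪ Set.range u) < κ :=
    (mk_union_le _ _).trans_lt <| add_lt_of_lt hκ
      (mk_range_le.trans_lt hJ)
      (mk_range_le.trans_lt <| (mk_subtype_le _).trans_lt <|
        mk_finset_lt_of_lt hκ hJ)
  obtain ⟨b, hb, hbavoid⟩ :
      ∃ b : B, b ≠ ⊥ ∧ ∀ q ∈ Set.range (left ∘ x) ∪ Set.range u, b ∉ q := by
    by_contra! h
    exact (hdense _ (BAUltrafilter.dense_iff.2 h)).not_gt hcard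
  obtain ⟨q, hbq⟩ := BAUltrafilter.exists_mem_of_ne_bot hb
  obtain ⟨r, hr, hbr⟩ := BAUltrafilter.exists_forall_mem_of_forall_not_inf_le
    (fun j : {j // (x j).mark ∈ q} => (x j).mark) (b := b) fun s hs => by
      let σ := s.map (Function.Embedding.subtype _)
      have hσ : σ.inf (mark ∘ x) ∈ q := by
        rw [Finset.inf_map]
        exact BAUltrafilter.finset_inf_mem fun j _ => j.2
      refine hbavoid (u ⟨σ, BAUltrafilter.ne_bot_of_mem hσ⟩) (Or.inr ⟨_, rfl⟩) ?_
      refine (u _).mem_of_le (hu _) ?_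
      rw [Finset.inf_map]
      exact hs
  exact ⟨⟨b, q, r⟩, ⟨hbq, hbr⟩, fun j => ⟨fun h => hbavoid _ (Or.inl ⟨j, rfl⟩) h,
    fun h => hr ⟨j, h⟩⟩⟩

end MarkedPair

theorem exists_discrete_mk_eq_of_le_mk_dense {B : Type u} [BooleanAlgebra B] {κ : Cardinal.{u}}
    (hκ : ℵ₀ ≤ κ) (hdense : ∀ Q : Set (BAUltrafilter B), Dense Q → κ ≤ #Q) :
    ∃ D : Set (BAUltrafilter B × BAUltrafilter B),
      (∀ p ∈ D, ∃ U : Set (BAUltrafilter B × BAUltrafilter B), IsOpen U ∧ U ∩ D = {p}) ∧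
        #D = κ := by
  obtain ⟨f, hf, hlt⟩ := exists_transfinite_seq (κ := κ) MarkedPair.IsMarked MarkedPair.Precedes
    fun _ x hJ => MarkedPair.exists_isMarked_forall_precedes hκ hdense x hJ
  refine ⟨Set.range (MarkedPair.toProd ∘ f), ?_, ?_⟩
  · rintro _ ⟨i, rfl⟩
    exact MarkedPair.exists_isOpen_inter_range_toProd_comp hlt hf i
  · rw [mk_range_eq _ (MarkedPair.injective_toProd_comp hlt hf), mk_ord_toType]

/-- For an infinite Boolean algebra `B`, there is a discrete
subspace of `Stone(B) × Stone(B)` whose cardinality equals the density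
`d(Stone(B))` (the least cardinality of a dense subset of the Stone space);
in particular the spread of `Stone(B) × Stone(B)` is at least `d(Stone(B))`. -/
theorem density_le_spread_of_square (B : Type u) [BooleanAlgebra B] [Infinite B] :
    (∃ D : Set (BAUltrafilter B × BAUltrafilter B),
        (∀ p ∈ D, ∃ U : Set (BAUltrafilter B × BAUltrafilter B),
            IsOpen U ∧ U ∩ D = {p}) ∧
        #D = sInf {κ : Cardinal.{u} | ∃ Q : Set (BAUltrafilter B), Dense Q ∧ #Q = κ}) ∧
    sInf {κ : Cardinal.{u} | ∃ Q : Set (BAUltrafilter B), Dense Q ∧ #Q = κ} ≤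
      sSup {κ : Cardinal.{u} | ∃ D : Set (BAUltrafilter B × BAUltrafilter B),
        (∀ p ∈ D, ∃ U : Set (BAUltrafilter B × BAUltrafilter B),
            IsOpen U ∧ U ∩ D = {p}) ∧ #D = κ} := by
  set κ := sInf {κ : Cardinal.{u} | ∃ Q : Set (BAUltrafilter B), Dense Q ∧ #Q = κ}
  have hdense (Q : Set (BAUltrafilter B)) (hQ : Dense Q) : κ ≤ #Q := csInf_le' ⟨Q, hQ, rfl⟩
  have hκ : ℵ₀ ≤ κ := le_csInf ⟨_, Set.univ, dense_univ, rfl⟩ fun _ ⟨_, hQ, hQκ⟩ =>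
    hQκ ▸ BAUltrafilter.aleph0_le_mk_of_dense hQ
  obtain ⟨D, hD, hDκ⟩ := exists_discrete_mk_eq_of_le_mk_dense hκ hdense
  refine ⟨⟨D, hD, hDκ⟩, le_csSup ⟨#(BAUltrafilter B × BAUltrafilter B), ?_⟩ ⟨D, hD, hDκ⟩⟩
  rintro _ ⟨E, -, rfl⟩
  exact mk_set_le E
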